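/- Let h be analytic on a closed disk centered at a real z₀, real on reals, with h(z₀) ≠ 0. For small ε > 0 the equation (z - z₀)² = ε·h(z) has exactly two solutions near z₀; if h(z₀) > 0 both solutions are real, and if h(z₀) < 0 both solutions are non-real (complex conjugates of each other). -/

import Mathlib

/-!
Near `z₀` the quotient `h / h z₀` is close to `1`, so it has a principal square root `s`, analytic
and, by Schwarz reflection, satisfying `s z̄ = conj (s z)`. With `σ² = ε h z₀` the equation reads
`(z - z₀)² = σ² s(z)²`, i.e. `z` is a fixed point of `z ↦ z₀ + σ s z` or of `z ↦ z₀ - σ s z`; for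
small `σ` both maps are contractions of a small disk, each with exactly one fixed point there.
Conjugation carries fixed points of `z ↦ z₀ + σ s z` to those of `z ↦ z₀ + σ̄ s z`, and `σ` is
real when `h z₀ > 0` and purely imaginary when `h z₀ < 0`: this makes the two solutions real in
the first case and swaps them in the second.
-/

open Filter Metric Set Function Topology ComplexConjugate
open scoped NNReal

section FixedPoint

variable {X : Type*} [MetricSpace X] {g : X → X} {K : ℝ≥0} {s : Set X}

theorem LipschitzOnWith.eq_of_isFixedPt (hg : LipschitzOnWith K g s) (hK : K < 1) {x y : X}
    (hx : x ∈ s) (hy : y ∈ s) (hgx : IsFixedPt g x) (hgy : IsFixedPt g y) : x = y := by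
  have hle : dist x y ≤ K * dist x y := by
    simpa only [hgx.eq, hgy.eq] using hg.dist_le_mul x hx y hy
  have hK' : (K : ℝ) < 1 := hK
  exact dist_eq_zero.1 (by nlinarith [dist_nonneg (x := x) (y := y)])

theorem LipschitzOnWith.existsUnique_isFixedPt [CompleteSpace X] (hg : LipschitzOnWith K g s)
    (hK : K < 1) (hs : IsClosed s) (hgs : MapsTo g s s) (hne : s.Nonempty) :
    ∃! x, x ∈ s ∧ IsFixedPt g x := by
  obtain ⟨x₀, hx₀⟩ := hne
  obtain ⟨x, hx, hgx, -⟩ := ContractingWith.exists_fixedPoint' hs.isComplete hgs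
    ⟨hK, hgs.lipschitzOnWith_iff_restrict.mp hg⟩ hx₀ (edist_ne_top _ _)
  exact ⟨x, ⟨hx, hgx⟩, fun y hy => hg.eq_of_isFixedPt hK hy.1 hx hy.2 hgx⟩

end FixedPoint

section SmallPerturbation

variable {𝕜 E : Type*} [NontriviallyNormedField 𝕜] [NormedAddCommGroup E] [NormedSpace 𝕜 E]
  {f : E → E} {K : ℝ≥0} {s : Set E}

theorem LipschitzOnWith.const_add_smul (hf : LipschitzOnWith K f s) (a : E) (σ : 𝕜) :
    LipschitzOnWith (‖σ‖₊ * K) (fun z => a + σ • f z) s :=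
  LipschitzOnWith.of_dist_le_mul fun x hx y hy => by
    rw [dist_add_left, dist_smul₀, NNReal.coe_mul, coe_nnnorm, mul_assoc]
    exact mul_le_mul_of_nonneg_left (hf.dist_le_mul x hx y hy) (norm_nonneg σ)

theorem LipschitzOnWith.norm_le_of_mem_closedBall {a : E} {ρ : ℝ}
    (hf : LipschitzOnWith K f (closedBall a ρ)) {z : E} (hz : z ∈ closedBall a ρ) :
    ‖f z‖ ≤ ‖f a‖ + K * ρ :=
  calc ‖f z‖ ≤ ‖f a‖ + dist (f z) (f a) := by
        rw [dist_eq_norm]; exact norm_le_norm_add_norm_sub' (f z) (f a)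
    _ ≤ ‖f a‖ + K * ρ := by
      gcongr
      exact (hf.dist_le_mul z hz a (mem_closedBall_self (dist_nonneg.trans hz))).trans
        (mul_le_mul_of_nonneg_left hz K.2)

theorem LipschitzOnWith.eventually_existsUnique_isFixedPt_const_add_smul [CompleteSpace E]
    {a : E} {ρ : ℝ} (hf : LipschitzOnWith K f (closedBall a ρ)) (hρ : 0 < ρ) :
    ∀ᶠ σ in 𝓝 (0 : 𝕜), ∃! w, w ∈ ball a ρ ∧ IsFixedPt (fun z => a + σ • f z) w := by
  set M := ‖f a‖ + K * ρ
  have hsmall : ∀ᶠ σ in 𝓝 (0 : 𝕜), ‖σ‖ * M < ρ ∧ ‖σ‖ * K < 1 := by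
    have h0 : Tendsto (fun σ : 𝕜 => ‖σ‖) (𝓝 0) (𝓝 0) := tendsto_norm_zero
    exact ((h0.mul_const M).eventually_lt_const (by simpa using hρ)).and
      ((h0.mul_const (K : ℝ)).eventually_lt_const (by simp))
  filter_upwards [hsmall] with σ ⟨hσM, hσK⟩
  have hT := hf.const_add_smul a σ
  have hmaps : ∀ z ∈ closedBall a ρ, a + σ • f z ∈ ball a ρ := fun z hz => by
    rw [mem_ball, dist_comm, dist_self_add_right, norm_smul]
    exact lt_of_le_of_lt (mul_le_mul_of_nonneg_left (hf.norm_le_of_mem_closedBall hz)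
      (norm_nonneg σ)) hσM
  obtain ⟨w, ⟨hw, hfix⟩, huniq⟩ := hT.existsUnique_isFixedPt (by exact_mod_cast hσK)
    isClosed_closedBall (fun z hz => ball_subset_closedBall (hmaps z hz))
    ⟨a, mem_closedBall_self hρ.le⟩
  exact ⟨w, ⟨hfix ▸ hmaps w hw, hfix⟩, fun z hz => huniq z ⟨ball_subset_closedBall hz.1, hz.2⟩⟩

end SmallPerturbation

namespace Complex

theorem sq_sqrt (z : ℂ) : sqrt z ^ 2 = z :=
  cpow_ofNat_inv_pow z 2

theorem sqrt_conj {z : ℂ} (hz : z ∈ slitPlane) : sqrt (conj z) = conj (sqrt z) := by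
  simp only [sqrt, conj_cpow z _ (slitPlane_arg_ne_pi hz), map_inv₀, map_ofNat]

theorem re_eq_zero_or_im_eq_zero_of_sq_eq_ofReal {σ : ℂ} {t : ℝ} (h : σ ^ 2 = t) :
    σ.re = 0 ∨ σ.im = 0 := by
  have him := congrArg im h
  simp only [sq, mul_im, ofReal_im] at him
  exact mul_eq_zero.1 (by linear_combination him / 2)

theorem conj_eq_of_sq_eq_ofReal_pos {σ : ℂ} {t : ℝ} (h : σ ^ 2 = t) (ht : 0 < t) :
    conj σ = σ := by
  have hre : σ.re ^ 2 - σ.im ^ 2 = t := by simpa [sq] using congrArg re h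
  rw [conj_eq_iff_im]
  rcases re_eq_zero_or_im_eq_zero_of_sq_eq_ofReal h with h0 | h0
  · nlinarith
  · exact h0

theorem conj_eq_neg_of_sq_eq_ofReal_neg {σ : ℂ} {t : ℝ} (h : σ ^ 2 = t) (ht : t < 0) :
    conj σ = -σ := by
  have hre : σ.re ^ 2 - σ.im ^ 2 = t := by simpa [sq] using congrArg re h
  have : σ.re = 0 := by
    rcases re_eq_zero_or_im_eq_zero_of_sq_eq_ofReal h with h0 | h0
    · exact h0
    · nlinarith
  exact ext (by simp [this]) (by simp)

theorem conj_mem_ball {x : ℝ} {ρ : ℝ} {z : ℂ} (hz : z ∈ ball (x : ℂ) ρ) :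
    conj z ∈ ball (x : ℂ) ρ := by
  rwa [mem_ball, ← conj_ofReal, dist_conj_conj]

end Complex

open Complex

theorem AnalyticAt.eventually_apply_conj {f : ℂ → ℂ} {x : ℝ} (hf : AnalyticAt ℂ f x)
    (hreal : ∀ᶠ y : ℝ in 𝓝 x, (f y).im = 0) :
    ∀ᶠ z in 𝓝 (x : ℂ), f (conj z) = conj (f z) := by
  have hconj : Tendsto conj (𝓝 (x : ℂ)) (𝓝 (x : ℂ)) :=
    continuous_conj.tendsto' _ _ (conj_ofReal x)
  have hg : AnalyticAt ℂ (conj ∘ f ∘ conj) x := analyticAt_iff_eventually_differentiableAt.2 <|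
    (hconj.eventually (analyticAt_iff_eventually_differentiableAt.1 hf)).mono
      fun z hz => differentiableAt_conj_conj_iff.2 hz
  have hofReal : Tendsto ((↑) : ℝ → ℂ) (𝓝[≠] x) (𝓝[≠] (x : ℂ)) :=
    continuous_ofReal.continuousWithinAt.tendsto_nhdsWithin fun _ hy => by simpa using hy
  have hfreq : ∃ᶠ z in 𝓝[≠] (x : ℂ), f z = (conj ∘ f ∘ conj) z :=
    hofReal.frequently <| Eventually.frequently <|
      (eventually_nhdsWithin_of_eventually_nhds hreal).mono fun y hy => by
        simp [conj_eq_iff_im.2 hy]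
  filter_upwards [(hf.frequently_eq_iff_eventually_eq hg).1 hfreq] with z hz
  rw [hz, comp_apply, comp_apply, conj_conj]

theorem AnalyticAt.exists_sqrt_conj {h : ℂ → ℂ} {x : ℝ} (hh : AnalyticAt ℂ h x) (hne : h x ≠ 0)
    (hsymm : ∀ᶠ z in 𝓝 (x : ℂ), h (conj z) = conj (h z)) :
    ∃ ρ > 0, ∃ s : ℂ → ℂ, ∃ K, LipschitzOnWith K s (closedBall (x : ℂ) ρ) ∧
      ∀ z ∈ ball (x : ℂ) ρ, h z = h x * s z ^ 2 ∧ s z ≠ 0 ∧ s (conj z) = conj (s z) := by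
  set g : ℂ → ℂ := fun z => h z / h x
  have hg : AnalyticAt ℂ g x := hh.div_const
  have hslit : ∀ᶠ z in 𝓝 (x : ℂ), g z ∈ slitPlane :=
    hg.continuousAt.eventually_mem (isOpen_slitPlane.mem_nhds (by simp [g, hne]))
  have hs : AnalyticAt ℂ (fun z => sqrt (g z)) x := hg.cpow analyticAt_const hslit.self_of_nhds
  obtain ⟨K, t, ht, hLip⟩ := hs.contDiffAt.exists_lipschitzOnWith
  obtain ⟨ρ, hρ, hρt⟩ := nhds_basis_closedBall.mem_iff.1 (inter_mem ht (hslit.and hsymm))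
  refine ⟨ρ, hρ, fun z => sqrt (g z), K, hLip.mono (hρt.trans inter_subset_left), fun z hz => ?_⟩
  obtain ⟨hgz, hz_symm⟩ := (hρt (ball_subset_closedBall hz)).2
  have hx_real : conj (h x) = h x := by simpa using hsymm.self_of_nhds.symm
  have hg_conj : g (conj z) = conj (g z) := by simp only [g, hz_symm, map_div₀, hx_real]
  show h z = h x * sqrt (g z) ^ 2 ∧ sqrt (g z) ≠ 0 ∧ sqrt (g (conj z)) = conj (sqrt (g z))
  refine ⟨?_, fun h0 => slitPlane_ne_zero hgz ?_, by rw [hg_conj, sqrt_conj hgz]⟩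
  · rw [sq_sqrt]; exact (mul_div_cancel₀ (h z) hne).symm
  · rw [← sq_sqrt (g z), h0, zero_pow two_ne_zero]

section FixedPoints

variable {s g : ℂ → ℂ} {x ρ : ℝ} {σ : ℂ}

theorem isFixedPt_conj_const_add_smul {w : ℂ} (hs : s (conj w) = conj (s w))
    (hw : IsFixedPt (fun z => (x : ℂ) + σ • s z) w) :
    IsFixedPt (fun z => (x : ℂ) + conj σ • s z) (conj w) := by
  change (x : ℂ) + conj σ * s (conj w) = conj w
  conv_rhs => rw [← hw.eq]
  simp only [hs, smul_eq_mul, map_add, map_mul, conj_ofReal]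

theorem sq_sub_eq_sq_mul_sq_iff_isFixedPt {z : ℂ} :
    (z - x) ^ 2 = σ ^ 2 * s z ^ 2 ↔
      IsFixedPt (fun z => (x : ℂ) + σ • s z) z ∨ IsFixedPt (fun z => (x : ℂ) + (-σ) • s z) z := by
  rw [← mul_pow, sq_eq_sq_iff_eq_or_eq_neg]
  simp only [IsFixedPt, smul_eq_mul]
  constructor <;> rintro (h | h) <;> [left; right; left; right] <;> linear_combination -h

theorem exists_two_solutions_of_existsUnique_isFixedPt (hσ : σ ≠ 0)
    (hg : ∀ z ∈ ball (x : ℂ) ρ, g z = σ ^ 2 * s z ^ 2)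
    (hs0 : ∀ z ∈ ball (x : ℂ) ρ, s z ≠ 0)
    (hs_conj : ∀ z ∈ ball (x : ℂ) ρ, s (conj z) = conj (s z))
    (h₁ : ∃! w, w ∈ ball (x : ℂ) ρ ∧ IsFixedPt (fun z => (x : ℂ) + σ • s z) w)
    (h₂ : ∃! w, w ∈ ball (x : ℂ) ρ ∧ IsFixedPt (fun z => (x : ℂ) + (-σ) • s z) w) :
    ∃ w₁ w₂ : ℂ, w₁ ≠ w₂ ∧
      (w₁ ∈ ball (x : ℂ) ρ ∧ (w₁ - x) ^ 2 = g w₁) ∧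
      (w₂ ∈ ball (x : ℂ) ρ ∧ (w₂ - x) ^ 2 = g w₂) ∧
      (∀ z ∈ ball (x : ℂ) ρ, (z - x) ^ 2 = g z → z = w₁ ∨ z = w₂) ∧
      (conj σ = σ → w₁.im = 0 ∧ w₂.im = 0) ∧
      (conj σ = -σ → w₁.im ≠ 0 ∧ w₂ = conj w₁) := by
  obtain ⟨w₁, ⟨hw₁, hfix₁⟩, huniq₁⟩ := h₁
  obtain ⟨w₂, ⟨hw₂, hfix₂⟩, huniq₂⟩ := h₂
  have hsol : ∀ z ∈ ball (x : ℂ) ρ, (z - x) ^ 2 = g z ↔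
      IsFixedPt (fun z => (x : ℂ) + σ • s z) z ∨ IsFixedPt (fun z => (x : ℂ) + (-σ) • s z) z :=
    fun z hz => by rw [hg z hz, sq_sub_eq_sq_mul_sq_iff_isFixedPt]
  have hne : w₁ ≠ w₂ := by
    rintro rfl
    have : 2 * σ * s w₁ = 0 := by
      have := hfix₁.eq.trans hfix₂.eq.symm
      simp only [smul_eq_mul] at this
      linear_combination this
    simp [hσ, hs0 w₁ hw₁] at this
  have hconj₁ := isFixedPt_conj_const_add_smul (hs_conj w₁ hw₁) hfix₁
  refine ⟨w₁, w₂, hne, ⟨hw₁, (hsol w₁ hw₁).2 (.inl hfix₁)⟩, ⟨hw₂, (hsol w₂ hw₂).2 (.inr hfix₂)⟩,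
    fun z hz hz' => ((hsol z hz).1 hz').imp (fun h => huniq₁ z ⟨hz, h⟩) (fun h => huniq₂ z ⟨hz, h⟩),
    fun hσ_real => ⟨?_, ?_⟩, fun hσ_imag => ?_⟩
  · rw [← conj_eq_iff_im]
    exact huniq₁ _ ⟨conj_mem_ball hw₁, hσ_real ▸ hconj₁⟩
  · rw [← conj_eq_iff_im]
    have := isFixedPt_conj_const_add_smul (hs_conj w₂ hw₂) hfix₂
    rw [map_neg, hσ_real] at this
    exact huniq₂ _ ⟨conj_mem_ball hw₂, this⟩
  · have hw₂_eq : conj w₁ = w₂ := huniq₂ _ ⟨conj_mem_ball hw₁, hσ_imag ▸ hconj₁⟩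
    refine ⟨fun him => hne ?_, hw₂_eq.symm⟩
    rw [← hw₂_eq, conj_eq_iff_im.2 him]

end FixedPoints

/-- Reality of the two solutions of `(z - z₀)² = ε h(z)` near a real `z₀`, for `h`
analytic on a closed disk about `z₀`, real on reals, with `h z₀ ≠ 0`: for small
`ε > 0` there are exactly two solutions near `z₀`; if `h z₀ > 0` both are real,
and if `h z₀ < 0` both are non-real complex conjugates of each other. -/
theorem two_solutions_real_or_conjugate
    (z₀ : ℝ) (r : ℝ) (hr : 0 < r) (h : ℂ → ℂ)
    (hh : DifferentiableOn ℂ h (Metric.closedBall (z₀ : ℂ) r))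
    (hreal : ∀ x : ℝ, (x : ℂ) ∈ Metric.closedBall (z₀ : ℂ) r → (h x).im = 0)
    (hne : h z₀ ≠ 0) :
    ∃ r₀ > (0 : ℝ), ∃ ε₀ > (0 : ℝ), ∀ ε : ℝ, 0 < ε → ε < ε₀ →
      ∃ z₁ z₂ : ℂ, z₁ ≠ z₂ ∧
        (z₁ ∈ Metric.ball (z₀ : ℂ) r₀ ∧ (z₁ - z₀) ^ 2 = (ε : ℂ) * h z₁) ∧
        (z₂ ∈ Metric.ball (z₀ : ℂ) r₀ ∧ (z₂ - z₀) ^ 2 = (ε : ℂ) * h z₂) ∧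
        (∀ z : ℂ, z ∈ Metric.ball (z₀ : ℂ) r₀ → (z - z₀) ^ 2 = (ε : ℂ) * h z →
          z = z₁ ∨ z = z₂) ∧
        (0 < (h z₀).re → z₁.im = 0 ∧ z₂.im = 0) ∧
        ((h z₀).re < 0 → z₁.im ≠ 0 ∧ z₂ = (starRingEnd ℂ) z₁) := by
  have han : AnalyticAt ℂ h z₀ := hh.analyticAt (closedBall_mem_nhds _ hr)
  have hsymm := han.eventually_apply_conj <| eventually_of_mem
    (continuous_ofReal.continuousAt.preimage_mem_nhds (closedBall_mem_nhds _ hr)) hreal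
  obtain ⟨ρ, hρ, s, K, hLip, hs⟩ := han.exists_sqrt_conj hne hsymm
  have hc_real : h z₀ = (h z₀).re :=
    (conj_eq_iff_re.1 (conj_eq_iff_im.2 (hreal z₀ (mem_closedBall_self hr.le)))).symm
  obtain ⟨u, hu⟩ := IsAlgClosed.exists_pow_nat_eq (h z₀) two_pos
  have hσ : Tendsto (fun ε : ℝ => (√ε : ℂ) * u) (𝓝 0) (𝓝 0) := by
    simpa using ((continuous_ofReal.comp Real.continuous_sqrt).tendsto 0).mul_const u
  have hfix := hLip.eventually_existsUnique_isFixedPt_const_add_smul (𝕜 := ℂ) hρ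
  obtain ⟨ε₀, hε₀, hsmall⟩ := Metric.eventually_nhds_iff.1
    ((hσ.eventually hfix).and (hσ.neg.eventually (by rwa [neg_zero])))
  refine ⟨ρ, hρ, ε₀, hε₀, fun ε hε hεε₀ => ?_⟩
  obtain ⟨hfix_pos, hfix_neg⟩ := hsmall (by rwa [Real.dist_0_eq_abs, abs_of_pos hε])
  have hσ_sq : ((√ε : ℂ) * u) ^ 2 = ((ε * (h z₀).re : ℝ) : ℂ) := by
    rw [mul_pow, ← ofReal_pow, Real.sq_sqrt hε.le, hu, ofReal_mul, ← hc_real]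
  obtain ⟨z₁, z₂, hz₁₂, hz₁, hz₂, huniq, hpos, hneg⟩ :=
    exists_two_solutions_of_existsUnique_isFixedPt (g := fun z => (ε : ℂ) * h z)
    (mul_ne_zero (ofReal_ne_zero.2 (Real.sqrt_pos.2 hε).ne') (ne_zero_pow two_ne_zero (hu ▸ hne)))
    (fun z hz => by rw [(hs z hz).1, hσ_sq, ofReal_mul, ← hc_real]; ring)
    (fun z hz => (hs z hz).2.1) (fun z hz => (hs z hz).2.2) hfix_pos hfix_neg
  exact ⟨z₁, z₂, hz₁₂, hz₁, hz₂, huniq,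
    fun hc_pos => hpos (conj_eq_of_sq_eq_ofReal_pos hσ_sq (by positivity)),
    fun hc_neg => hneg (conj_eq_neg_of_sq_eq_ofReal_neg hσ_sq (mul_neg_of_pos_of_neg hε hc_neg))⟩
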